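/- Let f̃(l) = E^π[f(θ) | L(θ) = l] and suppose f̃ is absolutely continuous. Then ∫₀¹ φ(x) f̃(φ(x)) dx = ∫ π(θ) L(θ) f(θ) dθ, where φ is the inverse of the survival function of L(θ) under θ ∼ π. -/

import Mathlib

/-!
For `x` uniform on `(0, 1)`, `φ x` has the law of `L θ` under `π`: the set
`{x ∈ (0, 1) | t < φ x}` is an interval of length `π (L > t)`. Hence
`∫₀¹ φ f̃(φ) = E^π[L f̃(L)]`, which is `E^π[L f]` by the defining property of `f̃` for `g = id`.
The change of variables holds for every integrand: if `l ↦ l f̃(l)` is not a.e. measurable for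
the law of `L`, then, disintegrating along the map, neither of its compositions with `φ` and `L`
is, and both integrals are `0`.
-/

open MeasureTheory ProbabilityTheory Set

section CompMap

variable {Ω α E : Type*} [MeasurableSpace Ω] [StandardBorelSpace Ω] [Nonempty Ω]
  [MeasurableSpace α] [MeasurableEq α] [NormedAddCommGroup E] [NormedSpace ℝ E] [CompleteSpace E]
  {μ : Measure Ω} [IsFiniteMeasure μ]

theorem aestronglyMeasurable_map_of_comp {X : Ω → α} (hX : Measurable X) {h : α → E}
    (hh : AEStronglyMeasurable (fun ω => h (X ω)) μ) : AEStronglyMeasurable h (μ.map X) := by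
  obtain ⟨k, hk, hhk⟩ := hh
  obtain ⟨N, hhkN, hN, hμN⟩ := exists_measurable_superset_of_null (ae_iff.mp hhk)
  set κ := condDistrib id X μ
  -- `κ t`-almost every `ω` lies on the fibre `X ω = t` off `N`, where `k ω = h t`; so `h`
  -- agrees a.e. with the measurable `t ↦ ∫ k dκ t`.
  have hfibre : ∀ᵐ t ∂μ.map X, ∀ᵐ ω ∂κ t, X ω = t ∧ ω ∉ N := by
    refine Measure.ae_ae_of_ae_compProd (p := fun p : α × Ω => X p.2 = p.1 ∧ p.2 ∉ N) ?_
    rw [compProd_map_condDistrib aemeasurable_id,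
      ae_map_iff (hX.prodMk measurable_id).aemeasurable, ae_iff]
    · exact measure_mono_null (fun ω hω => by simpa using hω) hμN
    · exact (measurableSet_eq_fun (hX.comp measurable_snd) measurable_fst).inter
        (hN.compl.preimage measurable_snd)
  refine ⟨fun t => ∫ ω, k ω ∂κ t, (hk.comp_measurable measurable_snd).integral_condDistrib, ?_⟩
  filter_upwards [hfibre] with t ht
  have hk_const : k =ᵐ[κ t] fun _ => h t := by
    filter_upwards [ht] with ω ⟨rfl, hωN⟩
    exact not_not.mp fun hne => hωN (hhkN (Ne.symm hne))
  simp [integral_congr_ae hk_const]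

theorem aestronglyMeasurable_map_iff_comp {X : Ω → α} (hX : AEMeasurable X μ) {h : α → E} :
    AEStronglyMeasurable h (μ.map X) ↔ AEStronglyMeasurable (fun ω => h (X ω)) μ := by
  refine ⟨fun hh => hh.comp_aemeasurable hX, fun hh => ?_⟩
  rw [Measure.map_congr hX.ae_eq_mk]
  exact aestronglyMeasurable_map_of_comp hX.measurable_mk
    (hh.congr (hX.ae_eq_mk.fun_comp h))

theorem integral_comp_eq_of_map_eq {Ω' : Type*} [MeasurableSpace Ω'] [StandardBorelSpace Ω']
    [Nonempty Ω'] {μ' : Measure Ω'} [IsFiniteMeasure μ'] {X : Ω → α} {X' : Ω' → α}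
    (hX : AEMeasurable X μ) (hX' : AEMeasurable X' μ') (hmap : μ.map X = μ'.map X') (h : α → E) :
    ∫ ω, h (X ω) ∂μ = ∫ ω, h (X' ω) ∂μ' := by
  by_cases hh : AEStronglyMeasurable h (μ.map X)
  · rw [← integral_map hX hh, hmap, integral_map hX' (hmap ▸ hh)]
  · have hh' : ¬ AEStronglyMeasurable h (μ'.map X') := hmap ▸ hh
    rw [aestronglyMeasurable_map_iff_comp hX] at hh
    rw [aestronglyMeasurable_map_iff_comp hX'] at hh'
    rw [integral_non_aestronglyMeasurable hh, integral_non_aestronglyMeasurable hh']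

end CompMap

section Quantile

variable {ν : Measure ℝ} {φ : ℝ → ℝ}

theorem Ioo_subset_preimage_Ioi_inter_Ioo [IsProbabilityMeasure ν]
    (hφ : ∀ x ∈ Ioo (0 : ℝ) 1, (ν (Ioi (φ x))).toReal = x) (t : ℝ) :
    Ioo 0 (ν (Ioi t)).toReal ⊆ φ ⁻¹' Ioi t ∩ Ioo 0 1 := by
  intro x ⟨hx0, hxt⟩
  have hx : x ∈ Ioo (0 : ℝ) 1 := ⟨hx0, hxt.trans_le measureReal_le_one⟩
  refine ⟨?_, hx⟩
  by_contra hle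
  have := measureReal_mono (μ := ν) (Ioi_subset_Ioi (not_lt.mp hle))
  simp only [measureReal_def, hφ x hx] at this
  linarith

theorem preimage_Ioi_inter_Ioo_subset_Ioc [IsFiniteMeasure ν]
    (hφ : ∀ x ∈ Ioo (0 : ℝ) 1, (ν (Ioi (φ x))).toReal = x) (t : ℝ) :
    φ ⁻¹' Ioi t ∩ Ioo 0 1 ⊆ Ioc 0 (ν (Ioi t)).toReal := by
  intro x ⟨hxt, hx⟩
  refine ⟨hx.1, ?_⟩
  have := measureReal_mono (μ := ν) (Ioi_subset_Ioi (le_of_lt hxt))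
  simpa only [measureReal_def, hφ x hx] using this

theorem measurableSet_preimage_Ioi_inter_Ioo [IsProbabilityMeasure ν]
    (hφ : ∀ x ∈ Ioo (0 : ℝ) 1, (ν (Ioi (φ x))).toReal = x) (t : ℝ) :
    MeasurableSet (φ ⁻¹' Ioi t ∩ Ioo 0 1) := by
  set s := (ν (Ioi t)).toReal
  have hsub := Ioo_subset_preimage_Ioi_inter_Ioo hφ t
  have hdiff : (φ ⁻¹' Ioi t ∩ Ioo 0 1) \ Ioo 0 s ⊆ {s} := fun x ⟨hx, hxs⟩ =>
    le_antisymm (preimage_Ioi_inter_Ioo_subset_Ioc hφ t hx).2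
      (not_lt.mp fun h => hxs ⟨hx.2.1, h⟩)
  rw [← union_sdiff_cancel hsub]
  exact measurableSet_Ioo.union (subsingleton_singleton.anti hdiff).measurableSet

theorem volume_preimage_Ioi_inter_Ioo [IsProbabilityMeasure ν]
    (hφ : ∀ x ∈ Ioo (0 : ℝ) 1, (ν (Ioi (φ x))).toReal = x) (t : ℝ) :
    volume (φ ⁻¹' Ioi t ∩ Ioo 0 1) = ν (Ioi t) := by
  refine le_antisymm ?_ ?_
  · calc volume (φ ⁻¹' Ioi t ∩ Ioo 0 1) ≤ volume (Ioc 0 (ν (Ioi t)).toReal) :=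
          measure_mono (preimage_Ioi_inter_Ioo_subset_Ioc hφ t)
      _ = ν (Ioi t) := by simp
  · calc ν (Ioi t) = volume (Ioo 0 (ν (Ioi t)).toReal) := by simp
      _ ≤ volume (φ ⁻¹' Ioi t ∩ Ioo 0 1) :=
          measure_mono (Ioo_subset_preimage_Ioi_inter_Ioo hφ t)

theorem aemeasurable_restrict_Ioo_of_measure_Ioi [IsProbabilityMeasure ν]
    (hφ : ∀ x ∈ Ioo (0 : ℝ) 1, (ν (Ioi (φ x))).toReal = x) :
    AEMeasurable φ (volume.restrict (Ioo 0 1)) := by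
  refine aemeasurable_restrict_of_measurable_subtype measurableSet_Ioo
    (measurable_of_Ioi fun t => ?_)
  convert measurable_subtype_coe (measurableSet_preimage_Ioi_inter_Ioo hφ t) using 1
  ext
  simp

theorem map_restrict_Ioo_eq_of_measure_Ioi [IsProbabilityMeasure ν]
    (hφ : ∀ x ∈ Ioo (0 : ℝ) 1, (ν (Ioi (φ x))).toReal = x) :
    (volume.restrict (Ioo 0 1)).map φ = ν := by
  have hφm := aemeasurable_restrict_Ioo_of_measure_Ioi hφ
  have : IsProbabilityMeasure (volume.restrict (Ioo (0 : ℝ) 1)) := ⟨by simp⟩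
  have : IsProbabilityMeasure ((volume.restrict (Ioo (0 : ℝ) 1)).map φ) :=
    Measure.isProbabilityMeasure_map hφm
  refine Measure.ext_of_Iic _ _ fun t => ?_
  rw [← compl_Ioi, prob_compl_eq_one_sub measurableSet_Ioi, prob_compl_eq_one_sub measurableSet_Ioi,
    Measure.map_apply_of_aemeasurable hφm measurableSet_Ioi,
    Measure.restrict_apply' measurableSet_Ioo, volume_preimage_Ioi_inter_Ioo hφ]

end Quantile

theorem nested_sampling_posterior_lemma_general
    {d : ℕ} (π : Measure (Fin d → ℝ)) [IsProbabilityMeasure π]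
    (L f : (Fin d → ℝ) → ℝ) (ftilde : ℝ → ℝ)
    (hLmeas : Measurable L)
    -- `f̃(l)` is a version of the conditional expectation `E^π[f(θ) | L(θ) = l]`:
    (hcond : ∀ g : ℝ → ℝ, Measurable g →
      Integrable (fun θ => g (L θ) * f θ) π →
      ∫ θ, g (L θ) * f θ ∂π = ∫ θ, g (L θ) * ftilde (L θ) ∂π)
    (hfint : Integrable (fun θ => L θ * f θ) π)
    (φ : ℝ → ℝ)
    (hφinv : ∀ x ∈ Set.Ioo (0:ℝ) 1,
      0 < φ x ∧ (π {θ | φ x < L θ}).toReal = x) :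
    ∫ x in (0:ℝ)..1, φ x * ftilde (φ x) = ∫ θ, L θ * f θ ∂π := by
  have : IsProbabilityMeasure (π.map L) := Measure.isProbabilityMeasure_map hLmeas.aemeasurable
  have hφ : ∀ x ∈ Ioo (0 : ℝ) 1, (π.map L (Ioi (φ x))).toReal = x := fun x hx => by
    rw [Measure.map_apply hLmeas measurableSet_Ioi]
    exact (hφinv x hx).2
  calc ∫ x in (0:ℝ)..1, φ x * ftilde (φ x)
      = ∫ x in Ioo 0 1, φ x * ftilde (φ x) := by
        rw [intervalIntegral.integral_of_le zero_le_one, integral_Ioc_eq_integral_Ioo]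
    _ = ∫ θ, L θ * ftilde (L θ) ∂π :=
        integral_comp_eq_of_map_eq (aemeasurable_restrict_Ioo_of_measure_Ioi hφ)
          hLmeas.aemeasurable (map_restrict_Ioo_eq_of_measure_Ioi hφ) (fun l => l * ftilde l)
    _ = ∫ θ, L θ * f θ ∂π := (hcond id measurable_id hfint).symm

/-- Lemma 1 of Chopin & Robert: if `f̃(l) = E^π[f(θ) | L(θ) = l]` is absolutely
continuous (i.e. an integral of an integrable function) and `φ` is the decreasing
inverse of the survival function of `L(θ)` under `θ ∼ π`, then
`∫₀¹ φ(x) f̃(φ(x)) dx = ∫ π(θ) L(θ) f(θ) dθ`. -/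
theorem nested_sampling_posterior_lemma
    {d : ℕ} (π : Measure (Fin d → ℝ)) [IsProbabilityMeasure π]
    (L f : (Fin d → ℝ) → ℝ) (ftilde ftilde' : ℝ → ℝ)
    (hLmeas : Measurable L) (hLnn : ∀ θ : Fin d → ℝ, 0 ≤ L θ)
    (hLint : Integrable L π)
    -- `f̃` is absolutely continuous:
    (habs : IntervalIntegrable ftilde' volume 0 (⨆ θ, L θ) ∧
      ∀ l ∈ Set.Icc 0 (⨆ θ, L θ), ftilde l = ftilde 0 + ∫ t in (0:ℝ)..l, ftilde' t)
    -- `f̃(l)` is a version of the conditional expectation `E^π[f(θ) | L(θ) = l]`: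
    (hcond : ∀ g : ℝ → ℝ, Measurable g →
      Integrable (fun θ => g (L θ) * f θ) π →
      ∫ θ, g (L θ) * f θ ∂π = ∫ θ, g (L θ) * ftilde (L θ) ∂π)
    (hfint : Integrable (fun θ => L θ * f θ) π)
    (φ : ℝ → ℝ) (hφanti : StrictAntiOn φ (Set.Ioo 0 1))
    (hφinv : ∀ x ∈ Set.Ioo (0:ℝ) 1,
      0 < φ x ∧ (π {θ | φ x < L θ}).toReal = x) :
    ∫ x in (0:ℝ)..1, φ x * ftilde (φ x) = ∫ θ, L θ * f θ ∂π :=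
  nested_sampling_posterior_lemma_general π L f ftilde hLmeas hcond hfint φ hφinv
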